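/- Theorem 5 (determinized reachability controller, key induction): Let C and C_d be controllers for a deterministic non-blocking transition system T with C_d(x) ⊆ C(x) for every state x satisfying 0 < J(T/C_d,Y_S,Y_T,x) < +∞, and with both controllers everywhere nonempty. Then J(T/C_d,Y_S,Y_T,x) ≤ J(T/C,Y_S,Y_T,x) for all states x with J(T/C_d,Y_S,Y_T,x) < +∞. -/

import Mathlib

/-- `s, u` is a trajectory of length `N` of the controlled (deterministic)
system `T/C`. -/
def IsCtrlTraj {X U : Type*} (S : X → U → X) (C : X → Set U)
    (s : ℕ → X) (u : ℕ → U) (N : ℕ) : Prop :=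
  ∀ i < N, u i ∈ C (s i) ∧ s (i + 1) = S (s i) (u i)

/-- The trajectory `s` (of length `N`) meets the reachability specification
`(Y_S, Y_T)`. -/
def MeetsSpec {X Y : Type*} (O : X → Y) (Ys Yt : Set Y)
    (s : ℕ → X) (N : ℕ) : Prop :=
  ∃ K ≤ N, (∀ k ≤ K, O (s k) ∈ Ys) ∧ O (s K) ∈ Yt

/-- The entry time `J(T/C, Y_S, Y_T, x)`. -/
noncomputable def entryTime {X U Y : Type*} (S : X → U → X) (C : X → Set U)
    (O : X → Y) (Ys Yt : Set Y) (x : X) : ℕ∞ :=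
  sInf {N : ℕ∞ | ∃ m : ℕ, N = (m : ℕ∞) ∧
    ∀ s u, s 0 = x → IsCtrlTraj S C s u m → MeetsSpec O Ys Yt s m}

/-!
`ReachesWithin S C O Ys Yt m x` says that every `C`-trajectory of length `m` from `x` meets
the specification, so `J(T/C, x)` is the least such `m`. By induction on `m`: if `x` reaches
within `m` under `C_d` and within `m'` under `C`, then it reaches within `m'` under `C_d`.
Outside the target the entry time of `x` under `C_d` is positive and finite, so
`C_d(x) ⊆ C(x)`; every `C_d`-successor of `x` is then a `C`-successor, reaching within
`m' - 1` under `C` and within `m - 1` under `C_d`, and the induction hypothesis applies.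
-/

section ReachesWithin

variable {X U Y : Type*} {S : X → U → X} {C : X → Set U} {O : X → Y} {Ys Yt : Set Y}
  {m : ℕ} {x : X}

variable (S C O Ys Yt) in
def ReachesWithin (m : ℕ) (x : X) : Prop :=
  ∀ s u, s 0 = x → IsCtrlTraj S C s u m → MeetsSpec O Ys Yt s m

theorem exists_isCtrlTraj (hC : ∀ y, (C y).Nonempty) (x : X) (N : ℕ) :
    ∃ s u, s 0 = x ∧ IsCtrlTraj S C s u N := by
  let s : ℕ → X := fun n => Nat.rec x (fun _ y => S y (hC y).some) n
  exact ⟨s, fun n => (hC (s n)).some, rfl, fun i _ => ⟨(hC (s i)).some_mem, rfl⟩⟩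

theorem reachesWithin_of_mem_target (hs : O x ∈ Ys) (ht : O x ∈ Yt) :
    ReachesWithin S C O Ys Yt m x := by
  rintro s u rfl -
  exact ⟨0, Nat.zero_le _, fun k hk => by rwa [Nat.le_zero.mp hk], ht⟩

theorem reachesWithin_zero_iff [Nonempty U] :
    ReachesWithin S C O Ys Yt 0 x ↔ O x ∈ Ys ∧ O x ∈ Yt := by
  refine ⟨fun h => ?_, fun h => reachesWithin_of_mem_target h.1 h.2⟩
  obtain ⟨K, hK, hsafe, htarget⟩ :=
    h (fun _ => x) (fun _ => Classical.arbitrary U) rfl fun _ hi => absurd hi (Nat.not_lt_zero _)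
  obtain rfl := Nat.le_zero.mp hK
  exact ⟨hsafe 0 le_rfl, htarget⟩

theorem ReachesWithin.mem_safe (hC : ∀ y, (C y).Nonempty)
    (h : ReachesWithin S C O Ys Yt m x) : O x ∈ Ys := by
  obtain ⟨s, u, hs0, htraj⟩ := exists_isCtrlTraj hC x m
  obtain ⟨K, -, hsafe, -⟩ := h s u hs0 htraj
  exact hs0 ▸ hsafe 0 (Nat.zero_le _)

theorem ReachesWithin.successor_of_succ (ht : O x ∉ Yt)
    (h : ReachesWithin S C O Ys Yt (m + 1) x) {v : U} (hv : v ∈ C x) :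
    ReachesWithin S C O Ys Yt m (S x v) := by
  intro s u hs0 htraj
  have htraj' : IsCtrlTraj S C (fun i => Nat.casesOn i x s) (fun i => Nat.casesOn i v u) (m + 1)
    | 0, _ => ⟨hv, hs0⟩
    | j + 1, hj => htraj j (by omega)
  match h _ _ rfl htraj' with
  | ⟨0, _, _, htarget⟩ => exact absurd htarget ht
  | ⟨K + 1, hK, hsafe, htarget⟩ =>
    exact ⟨K, by omega, fun k hk => hsafe (k + 1) (by omega), htarget⟩

theorem reachesWithin_succ_of_successors (hs : O x ∈ Ys)
    (h : ∀ v ∈ C x, ReachesWithin S C O Ys Yt m (S x v)) :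
    ReachesWithin S C O Ys Yt (m + 1) x := by
  rintro s u rfl htraj
  obtain ⟨hu, hs1⟩ := htraj 0 (Nat.succ_pos _)
  obtain ⟨K, hK, hsafe, htarget⟩ :=
    h (u 0) hu (s ·.succ) (u ·.succ) hs1 fun i hi => htraj (i + 1) (by omega)
  refine ⟨K + 1, by omega, fun k hk => ?_, htarget⟩
  cases k with
  | zero => exact hs
  | succ j => exact hsafe j (by omega)

theorem entryTime_le_of_reachesWithin (h : ReachesWithin S C O Ys Yt m x) :
    entryTime S C O Ys Yt x ≤ m :=
  sInf_le ⟨m, rfl, h⟩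

theorem exists_reachesWithin_of_entryTime_lt_top (h : entryTime S C O Ys Yt x < ⊤) :
    ∃ m, ReachesWithin S C O Ys Yt m x := by
  obtain ⟨_, ⟨m, rfl, hm⟩, -⟩ := sInf_lt_iff.mp h
  exact ⟨m, hm⟩

theorem le_entryTime_of_forall_reachesWithin {a : ℕ∞}
    (h : ∀ m, ReachesWithin S C O Ys Yt m x → a ≤ m) : a ≤ entryTime S C O Ys Yt x :=
  le_sInf fun _ ⟨m, hm, hreach⟩ => hm ▸ h m hreach

theorem entryTime_pos_of_notMem [Nonempty U] (ht : O x ∉ Yt) : 0 < entryTime S C O Ys Yt x := by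
  refine lt_of_lt_of_le zero_lt_one (le_entryTime_of_forall_reachesWithin fun m hm => ?_)
  cases m with
  | zero => exact absurd (reachesWithin_zero_iff.mp hm).2 ht
  | succ m => exact_mod_cast Nat.succ_pos m

end ReachesWithin

theorem ReachesWithin.of_reachesWithin_of_subset {X U Y : Type*} {S : X → U → X}
    {O : X → Y} {Ys Yt : Set Y} {C Cd : X → Set U} (hCdne : ∀ x, (Cd x).Nonempty)
    (hsub : ∀ x, 0 < entryTime S Cd O Ys Yt x → entryTime S Cd O Ys Yt x < ⊤ → Cd x ⊆ C x)
    {m m' : ℕ} {x : X} (hd : ReachesWithin S Cd O Ys Yt m x)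
    (hc : ReachesWithin S C O Ys Yt m' x) : ReachesWithin S Cd O Ys Yt m' x := by
  have : Nonempty U := ⟨(hCdne x).some⟩
  induction m generalizing x m' with
  | zero =>
    obtain ⟨hs, ht⟩ := reachesWithin_zero_iff.mp hd
    exact reachesWithin_of_mem_target hs ht
  | succ m ih =>
    have hs := hd.mem_safe hCdne
    by_cases ht : O x ∈ Yt
    · exact reachesWithin_of_mem_target hs ht
    cases m' with
    | zero => exact absurd (reachesWithin_zero_iff.mp hc).2 ht
    | succ m' =>
      have hCd_sub : Cd x ⊆ C x := hsub x (entryTime_pos_of_notMem ht)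
        ((entryTime_le_of_reachesWithin hd).trans_lt (WithTop.coe_lt_top _))
      exact reachesWithin_succ_of_successors hs fun v hv =>
        ih (hd.successor_of_succ ht hv) (hc.successor_of_succ ht (hCd_sub hv))

theorem determinized_entryTime_le_general {X U Y : Type*}
    (S : X → U → X) (O : X → Y) (Ys Yt : Set Y)
    (C Cd : X → Set U)
    (hCdne : ∀ x, (Cd x).Nonempty)
    (hsub : ∀ x, 0 < entryTime S Cd O Ys Yt x →
      entryTime S Cd O Ys Yt x < ⊤ → Cd x ⊆ C x) :
    ∀ x, entryTime S Cd O Ys Yt x < ⊤ →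
      entryTime S Cd O Ys Yt x ≤ entryTime S C O Ys Yt x := by
  intro x hx
  obtain ⟨m, hd⟩ := exists_reachesWithin_of_entryTime_lt_top hx
  exact le_entryTime_of_forall_reachesWithin fun m' hc =>
    entryTime_le_of_reachesWithin (hd.of_reachesWithin_of_subset hCdne hsub hc)

/-- Theorem 5, key induction: if `C` and `C_d` are everywhere-nonempty
controllers for a deterministic non-blocking system `T`, with `C_d(x) ⊆ C(x)` for
every state `x` with `0 < J(T/C_d,Y_S,Y_T,x) < +∞`, then
`J(T/C_d,Y_S,Y_T,x) ≤ J(T/C,Y_S,Y_T,x)` for all `x` with finite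
`J(T/C_d,Y_S,Y_T,x)`. -/
theorem determinized_entryTime_le {X U Y : Type*}
    (S : X → U → X) (O : X → Y) (Ys Yt : Set Y) (hYts : Yt ⊆ Ys)
    (C Cd : X → Set U)
    (hCne : ∀ x, (C x).Nonempty) (hCdne : ∀ x, (Cd x).Nonempty)
    (hsub : ∀ x, 0 < entryTime S Cd O Ys Yt x →
      entryTime S Cd O Ys Yt x < ⊤ → Cd x ⊆ C x) :
    ∀ x, entryTime S Cd O Ys Yt x < ⊤ →
      entryTime S Cd O Ys Yt x ≤ entryTime S C O Ys Yt x :=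
  determinized_entryTime_le_general S O Ys Yt C Cd hCdne hsub
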